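/- Let ψ₁, ψ₂ : ℕ → ℝ⁺ be decreasing functions with ∑_{q=1}^∞ ψ₁(q)ψ₂(q) = ∞, and set ψᵢ*(q) = ψᵢ(q)/√(v(q)) for i = 1,2, where v(q) = ∑_{t=1}^q ψ₁(t)ψ₂(t). Then ψ₁* and ψ₂* are decreasing, ψᵢ*(q) → 0 as q → ∞, and ∑_{q=1}^∞ ψ₁*(q)ψ₂*(q) = ∞. -/
import Mathlib

open Filter Finset

private lemma vmono_aux (a : ℕ → ℝ) (ha : ∀ q, 0 < a q)
    (v : ℕ → ℝ) (hv : ∀ q, v q = ∑ t ∈ Finset.Icc 1 q, a t) : Monotone v := by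
  intro m n hmn
  rw [hv, hv]
  exact Finset.sum_le_sum_of_subset_of_nonneg
    (Finset.Icc_subset_Icc_right hmn) (fun i _ _ => (ha i).le)

private lemma vpos_aux (a : ℕ → ℝ) (ha : ∀ q, 0 < a q)
    (v : ℕ → ℝ) (hv : ∀ q, v q = ∑ t ∈ Finset.Icc 1 q, a t) :
    ∀ q, 1 ≤ q → 0 < v q := by
  intro q hq
  have : 0 < v 1 := by
    rw [hv]; simp [ha 1]
  exact lt_of_lt_of_le this (vmono_aux a ha v hv hq)

private lemma vtop_aux (a : ℕ → ℝ) (ha : ∀ q, 0 < a q) (hdiv : ¬ Summable a)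
    (v : ℕ → ℝ) (hv : ∀ q, v q = ∑ t ∈ Finset.Icc 1 q, a t) :
    Tendsto v atTop atTop := by
  have h := (not_summable_iff_tendsto_nat_atTop_of_nonneg (fun i => (ha i).le)).1 hdiv
  have hvq : ∀ q, v q = (∑ i ∈ Finset.range (q + 1), a i) + (-a 0) := by
    intro q
    have : Finset.range (q + 1) = insert 0 (Finset.Icc 1 q) := by
      ext i; simp [Finset.mem_range, Finset.mem_Icc]; omega
    rw [hv, this, Finset.sum_insert (by simp)]; ring
  have h2 : Tendsto (fun q => (∑ i ∈ Finset.range (q + 1), a i) + (-a 0)) atTop atTop :=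
    Filter.tendsto_atTop_add_const_right _ _ (h.comp (tendsto_add_atTop_nat 1))
  exact h2.congr (fun q => (hvq q).symm)

private lemma abel_dini_aux (a : ℕ → ℝ) (ha : ∀ q, 0 < a q) (hdiv : ¬ Summable a)
    (v : ℕ → ℝ) (hv : ∀ q, v q = ∑ t ∈ Finset.Icc 1 q, a t) :
    ¬ Summable (fun q => a q / v q) := by
  intro hsum
  have vmono := vmono_aux a ha v hv
  have vpos := vpos_aux a ha v hv
  have vtop := vtop_aux a ha hdiv v hv
  obtain ⟨s, hs⟩ := hsum.vanishing (e := Set.Iio (1/2 : ℝ))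
    (IsOpen.mem_nhds isOpen_Iio (by norm_num))
  set m : ℕ := s.sup id + 1 with hm
  have hm1 : 1 ≤ m := Nat.le_add_left 1 _
  -- choose n with v n ≥ 2 * v m
  obtain ⟨n₀, hn₀⟩ := (vtop.eventually_ge_atTop (2 * v m)).exists
  set n : ℕ := max n₀ m with hn
  have hvn2 : 2 * v m ≤ v n := le_trans hn₀ (vmono (le_max_left _ _))
  have hmn : m ≤ n := le_max_right _ _
  have hvm : 0 < v m := vpos m hm1
  have hvn : 0 < v n := lt_of_lt_of_le hvm (vmono hmn)
  -- sum over Ioc m n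
  have hdisj : Disjoint (Finset.Ioc m n) s := by
    rw [Finset.disjoint_left]
    intro i hi his
    have h1 : m < i := (Finset.mem_Ioc.1 hi).1
    have h2 : i ≤ s.sup id := Finset.le_sup (f := id) his
    omega
  have hlt := hs (Finset.Ioc m n) hdisj
  simp only [Set.mem_Iio] at hlt
  -- lower bound
  have hsumIoc : ∑ k ∈ Finset.Ioc m n, a k = v n - v m := by
    have : v m + ∑ k ∈ Finset.Ioc m n, a k = v n := by
      rw [hv, hv]
      have h0 : ∀ q : ℕ, Finset.Icc 1 q = Finset.Ioc 0 q := by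
        intro q; ext i; simp [Finset.mem_Icc, Finset.mem_Ioc]; omega
      rw [h0, h0]
      exact Finset.sum_Ioc_consecutive _ (Nat.zero_le m) hmn
    linarith
  have hbound : (v n - v m) / v n ≤ ∑ k ∈ Finset.Ioc m n, a k / v k := by
    rw [← hsumIoc, Finset.sum_div]
    apply Finset.sum_le_sum
    intro k hk
    have hk1 : m < k := (Finset.mem_Ioc.1 hk).1
    have hvk : 0 < v k := vpos k (by omega)
    exact div_le_div_of_nonneg_left (ha k).le hvk (vmono (Finset.mem_Ioc.1 hk).2)
  have : (1:ℝ)/2 ≤ (v n - v m) / v n := by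
    rw [le_div_iff₀ hvn]
    linarith
  linarith

theorem stmt_6 (ψ₁ ψ₂ : ℕ → ℝ) (h₁ : ∀ q, 0 < ψ₁ q) (h₂ : ∀ q, 0 < ψ₂ q)
    (hdec₁ : Antitone ψ₁) (hdec₂ : Antitone ψ₂)
    (hdiv : ¬ Summable (fun q => ψ₁ q * ψ₂ q))
    (v : ℕ → ℝ) (hv : ∀ q, v q = ∑ t ∈ Finset.Icc 1 q, ψ₁ t * ψ₂ t)
    (ψ₁' ψ₂' : ℕ → ℝ) (hs₁ : ∀ q, ψ₁' q = ψ₁ q / Real.sqrt (v q))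
    (hs₂ : ∀ q, ψ₂' q = ψ₂ q / Real.sqrt (v q)) :
    AntitoneOn ψ₁' (Set.Ici 1) ∧ AntitoneOn ψ₂' (Set.Ici 1) ∧
    Filter.Tendsto ψ₁' Filter.atTop (nhds 0) ∧
    Filter.Tendsto ψ₂' Filter.atTop (nhds 0) ∧
    ¬ Summable (fun q => ψ₁' q * ψ₂' q) := by
  set a : ℕ → ℝ := fun q => ψ₁ q * ψ₂ q with ha_def
  have ha : ∀ q, 0 < a q := fun q => mul_pos (h₁ q) (h₂ q)
  have vmono := vmono_aux a ha v hv
  have vpos := vpos_aux a ha v hv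
  have vtop := vtop_aux a ha hdiv v hv
  have vnonneg : ∀ q, 0 ≤ v q := by
    intro q; rw [hv]; exact Finset.sum_nonneg (fun i _ => (ha i).le)
  have anti : ∀ (ψ : ℕ → ℝ) (ψ' : ℕ → ℝ), (∀ q, 0 < ψ q) → Antitone ψ →
      (∀ q, ψ' q = ψ q / Real.sqrt (v q)) → AntitoneOn ψ' (Set.Ici 1) := by
    intro ψ ψ' hψ hdec hs m hm n hn hmn
    rw [hs, hs]
    have hvm : 0 < Real.sqrt (v m) := Real.sqrt_pos.2 (vpos m hm)
    exact div_le_div₀ (hψ m).le (hdec hmn) hvm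
      (Real.sqrt_le_sqrt (vmono hmn))
  have sqrtTop : Tendsto (fun q => Real.sqrt (v q)) atTop atTop := by
    have h := (tendsto_rpow_atTop (y := (1/2 : ℝ)) (by norm_num)).comp vtop
    refine h.congr' ?_
    filter_upwards [vtop.eventually_ge_atTop 0] with q hq
    simp [Function.comp, Real.sqrt_eq_rpow, one_div]
  have tend : ∀ (ψ : ℕ → ℝ) (ψ' : ℕ → ℝ), (∀ q, 0 < ψ q) → Antitone ψ →
      (∀ q, ψ' q = ψ q / Real.sqrt (v q)) → Tendsto ψ' atTop (nhds 0) := by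
    intro ψ ψ' hψ hdec hs
    apply squeeze_zero' (g := fun q => ψ 0 / Real.sqrt (v q))
    · filter_upwards with q
      rw [hs]
      exact div_nonneg (hψ q).le (Real.sqrt_nonneg _)
    · filter_upwards [eventually_ge_atTop 1] with q hq
      rw [hs]
      have hvq : 0 < Real.sqrt (v q) := Real.sqrt_pos.2 (vpos q hq)
      gcongr
      exact hdec (Nat.zero_le q)
    · exact tendsto_const_nhds.div_atTop sqrtTop
  refine ⟨anti ψ₁ ψ₁' h₁ hdec₁ hs₁, anti ψ₂ ψ₂' h₂ hdec₂ hs₂,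
    tend ψ₁ ψ₁' h₁ hdec₁ hs₁, tend ψ₂ ψ₂' h₂ hdec₂ hs₂, ?_⟩
  have key : (fun q => ψ₁' q * ψ₂' q) = fun q => a q / v q := by
    funext q
    rw [hs₁ q, hs₂ q, div_mul_div_comm, Real.mul_self_sqrt (vnonneg q)]
  rw [key]
  exact abel_dini_aux a ha hdiv v hv
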